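/- arXiv:1109.2255 — 10 statements merged into one kernel-verified Lean document; each statement's English description precedes it below -/
import Mathlib

section
/- Let A and B be n×n matrices over a field K with A² = aA + bI and B² = cB + dI for scalars a,b,c,d. Then A commutes with (A+B)((a+c)I − (A+B)). -/
theorem stmt_0 {K : Type*} [Field K] {n : ℕ} (A B : Matrix (Fin n) (Fin n) K)
    (a b c d : K) (hA : A ^ 2 = a • A + b • (1 : Matrix (Fin n) (Fin n) K))
    (hB : B ^ 2 = c • B + d • (1 : Matrix (Fin n) (Fin n) K)) :
    Commute A ((A + B) * ((a + c) • (1 : Matrix (Fin n) (Fin n) K) - (A + B))) := by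
  have hA' : A * A = a • A + b • (1 : Matrix (Fin n) (Fin n) K) := by rw [← pow_two, hA]
  have h3 : B * A * A = a • (B * A) + b • B := by
    rw [mul_assoc, hA']; simp [mul_add, mul_smul_comm]
  have hB' : B * B = c • B + d • (1 : Matrix (Fin n) (Fin n) K) := by rw [← pow_two, hB]
  show A * _ = _ * A
  simp only [mul_add, add_mul, mul_sub, sub_mul, smul_mul_assoc, mul_smul_comm, mul_one, one_mul,
    hA', hB', h3, ← mul_assoc]
  simp only [mul_add, add_mul, smul_mul_assoc, mul_smul_comm, smul_add, smul_smul, hA', hB',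
    mul_one, one_mul]
  module
end

section
/- For square matrices A ∈ Mat_p(K) and B ∈ Mat_q(K), the matrix U_{A⊕B} is similar to U_A ⊕ U_B. -/
theorem stmt_4 {K : Type*} [Field K] {p q : ℕ}
    (A : Matrix (Fin p) (Fin p) K) (B : Matrix (Fin q) (Fin q) K) :
    ∃ (e : ((Fin p ⊕ Fin q) ⊕ (Fin p ⊕ Fin q)) ≃ ((Fin p ⊕ Fin p) ⊕ (Fin q ⊕ Fin q)))
      (S : Matrix ((Fin p ⊕ Fin p) ⊕ (Fin q ⊕ Fin q)) ((Fin p ⊕ Fin p) ⊕ (Fin q ⊕ Fin q)) K),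
      IsUnit S ∧
      Matrix.reindex e e (Matrix.fromBlocks 1 (Matrix.fromBlocks A 0 0 B) 1 0) =
        S * Matrix.fromBlocks (Matrix.fromBlocks 1 A 1 0) 0 0 (Matrix.fromBlocks 1 B 1 0) * S⁻¹ := by
  refine ⟨Equiv.sumSumSumComm (Fin p) (Fin q) (Fin p) (Fin q), 1, isUnit_one, ?_⟩
  rw [inv_one, mul_one, one_mul]
  ext i j
  rcases i with (i | i) | (i | i) <;> rcases j with (j | j) | (j | j) <;>
    simp [Equiv.sumSumSumComm, Matrix.one_apply, Sum.inl.injEq, Sum.inr.injEq]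
end

section
/- Let P(t) be a monic polynomial of degree n over a field K with companion matrix C(P), and let α, β ∈ K. Then the 2n×2n block matrix [[αI_n, C(P)],[I_n, βI_n]] is similar to the companion matrix of the polynomial P((t−α)(t−β)), a monic polynomial of degree 2n. -/
/-!
Let `M` be the block matrix, `q = (t - α)(t - β)` and `v = e_(inl 0)`. Then
`q(M) = diag(C(P), C(P))`, so the vectors `q(M)^k v` and `(M - α) q(M)^k v` (`k < n`) are the
standard basis vectors and `v` is a cyclic vector of `M`: the Krylov matrix with columns
`M^j v`, `j < 2n`, is invertible. Moreover `(P ∘ q)(M) v = diag(P(C(P)), P(C(P))) v = 0`, and the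
Krylov matrix of any vector killed by a monic `Q` of degree `N` intertwines `M` with `C(Q)`.
-/

open Polynomial

/-- The companion matrix of a monic polynomial `P = t^n - a_{n-1} t^{n-1} - ⋯ - a_1 t - a_0`,
with ones on the subdiagonal and the `a_i` (i.e. `-(P.coeff i)`) in the last column. -/
def companion {K : Type*} [Field K] (n : ℕ) (P : Polynomial K) :
    Matrix (Fin n) (Fin n) K := fun i j =>
  if (j : ℕ) = n - 1 then -(P.coeff i) else if (i : ℕ) = (j : ℕ) + 1 then 1 else 0

open Matrix

section Krylov

variable {R : Type*} [CommRing R] {ι : Type*} [Fintype ι] [DecidableEq ι]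

def krylov (M : Matrix ι ι R) (v : ι → R) (N : ℕ) : Matrix ι (Fin N) R :=
  Matrix.of fun i j => (M ^ (j : ℕ) *ᵥ v) i

variable {M : Matrix ι ι R} {v : ι → R} {N : ℕ}

lemma krylov_mulVec_single (j : Fin N) :
    krylov M v N *ᵥ Pi.single j 1 = M ^ (j : ℕ) *ᵥ v := by
  ext i
  simp [krylov]

lemma krylov_mulVec_coeff {p : R[X]} (hp : p.natDegree < N) :
    krylov M v N *ᵥ (fun j => p.coeff j) = aeval M p *ᵥ v := by
  ext i
  rw [aeval_eq_sum_range' hp, sum_mulVec, ← Fin.sum_univ_eq_sum_range]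
  simp [krylov, mulVec, dotProduct, smul_mulVec, mul_comm]

lemma exists_krylov_mul_eq_one
    (h : ∀ i : ι, ∃ p : R[X], p.natDegree < N ∧ aeval M p *ᵥ v = Pi.single i 1) :
    ∃ T : Matrix (Fin N) ι R, krylov M v N * T = 1 := by
  choose p hdeg hp using h
  refine ⟨Matrix.of fun (j : Fin N) i => (p i).coeff j, ext_of_mulVec_single fun i => ?_⟩
  have hcol : (Matrix.of fun (j : Fin N) i => (p i).coeff j) *ᵥ Pi.single i 1 =
      fun j : Fin N => (p i).coeff j := by
    ext j
    simp
  rw [← mulVec_mulVec, hcol, krylov_mulVec_coeff (hdeg i), hp, one_mulVec]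

end Krylov

lemma exists_isUnit_reindex_eq_mul_mul_inv {R : Type*} [CommRing R] {ι : Type*} [Fintype ι]
    [DecidableEq ι] {N : ℕ} (e : ι ≃ Fin N) {M : Matrix ι ι R}
    {C : Matrix (Fin N) (Fin N) R} {S : Matrix ι (Fin N) R}
    {T : Matrix (Fin N) ι R} (hMS : M * S = S * C) (hST : S * T = 1) :
    ∃ S' : Matrix (Fin N) (Fin N) R, IsUnit S' ∧ reindex e e M = S' * C * S'⁻¹ := by
  have hMS' : reindex e e M * S.submatrix e.symm id = S.submatrix e.symm id * C := by
    rw [reindex_apply, submatrix_mul_equiv, hMS]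
    exact (submatrix_mul_equiv S C e.symm (Equiv.refl _) id).symm
  have hST' : S.submatrix e.symm id * T.submatrix id e.symm = 1 := by
    rw [← submatrix_one_equiv e.symm, ← hST]
    exact submatrix_mul_equiv S T e.symm (Equiv.refl _) e.symm
  refine ⟨S.submatrix e.symm id, IsUnit.of_mul_eq_one _ hST', ?_⟩
  rw [inv_eq_right_inv hST', ← hMS', Matrix.mul_assoc, hST', Matrix.mul_one]

lemma coeff_X_pow_sub_of_lt {R : Type*} [Ring R] (Q : R[X]) {i N : ℕ} (h : i < N) :
    (X ^ N - Q).coeff i = -Q.coeff i := by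
  simp [coeff_X_pow, h.ne]

section Companion

variable {K : Type*} [Field K] {N : ℕ} {Q : K[X]}

lemma companion_mulVec_single_of_lt (j : Fin N) (hj : (j : ℕ) + 1 < N) :
    companion N Q *ᵥ Pi.single j 1 = Pi.single ⟨j + 1, hj⟩ 1 := by
  ext i
  simp only [mulVec_single_one, col_apply, companion, if_neg (show (j : ℕ) ≠ N - 1 by omega),
    Pi.single_apply, Fin.ext_iff]

lemma companion_mulVec_single_of_eq (j : Fin N) (hj : (j : ℕ) = N - 1) :
    companion N Q *ᵥ Pi.single j 1 = fun i : Fin N => -Q.coeff i := by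
  ext i
  simp only [mulVec_single_one, col_apply, companion, if_pos hj]

lemma companion_pow_mulVec_single_zero [NeZero N] {k : ℕ} (hk : k < N) :
    companion N Q ^ k *ᵥ Pi.single 0 1 = Pi.single ⟨k, hk⟩ 1 := by
  induction k with
  | zero => rw [pow_zero, one_mulVec]; rfl
  | succ k ih =>
    rw [pow_succ', ← mulVec_mulVec, ih (by omega), companion_mulVec_single_of_lt _ hk]

lemma krylov_companion_single_zero [NeZero N] : krylov (companion N Q) (Pi.single 0 1) N = 1 :=
  ext_of_mulVec_single fun j => by
    rw [krylov_mulVec_single, companion_pow_mulVec_single_zero j.isLt, one_mulVec]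

lemma aeval_companion_mulVec_single_zero [NeZero N] (hQ : IsMonicOfDegree Q N) :
    aeval (companion N Q) Q *ᵥ Pi.single 0 1 = 0 := by
  have hpow : companion N Q ^ N *ᵥ Pi.single 0 1 = fun i : Fin N => -Q.coeff i := by
    have hsucc : companion N Q ^ N = companion N Q * companion N Q ^ (N - 1) := by
      rw [← pow_succ', Nat.sub_one_add_one (NeZero.ne N)]
    rw [hsucc, ← mulVec_mulVec,
      companion_pow_mulVec_single_zero (Nat.sub_one_lt (NeZero.ne N)),
      companion_mulVec_single_of_eq _ rfl]
  -- evaluate `X ^ N - Q` at `companion N Q` on `e₀` via its Krylov matrix `1` and directly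
  have h := krylov_mulVec_coeff (M := companion N Q) (v := Pi.single 0 1)
    ((isMonicOfDegree_X_pow K N).natDegree_sub_lt (NeZero.ne N) hQ)
  rw [krylov_companion_single_zero, one_mulVec,
    funext fun i : Fin N => coeff_X_pow_sub_of_lt Q i.isLt, map_sub, sub_mulVec, aeval_X_pow,
    hpow] at h
  exact sub_eq_self.mp h.symm

variable {ι : Type*} [Fintype ι] [DecidableEq ι] {M : Matrix ι ι K} {v : ι → K}

lemma mul_krylov_eq_krylov_mul_companion (hQ : IsMonicOfDegree Q N) (hv : aeval M Q *ᵥ v = 0) :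
    M * krylov M v N = krylov M v N * companion N Q := by
  refine ext_of_mulVec_single fun j => ?_
  rw [← mulVec_mulVec, ← mulVec_mulVec, krylov_mulVec_single, mulVec_mulVec, ← pow_succ']
  rcases Nat.lt_or_ge ((j : ℕ) + 1) N with hj | hj
  · rw [companion_mulVec_single_of_lt j hj, krylov_mulVec_single]
  · -- the last column of `companion N Q` is the coefficient vector of `X ^ N - Q`
    have hdeg : (X ^ N - Q).natDegree < N :=
      (isMonicOfDegree_X_pow K N).natDegree_sub_lt (by omega) hQ
    rw [companion_mulVec_single_of_eq j (by omega),
      ← funext fun i : Fin N => coeff_X_pow_sub_of_lt Q i.isLt,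
      krylov_mulVec_coeff hdeg, map_sub, sub_mulVec, hv, sub_zero, aeval_X_pow,
      show (j : ℕ) + 1 = N by omega]

end Companion

section Blocks

variable {R : Type*} [CommRing R] {l m : Type*} [Fintype l] [Fintype m] [DecidableEq l]
  [DecidableEq m]

lemma aeval_fromBlocks_zero (A : Matrix l l R) (D : Matrix m m R) (p : R[X]) :
    aeval (fromBlocks A 0 0 D) p = fromBlocks (aeval A p) 0 0 (aeval D p) := by
  induction p using Polynomial.induction_on' with
  | add p q hp hq => simp [hp, hq, fromBlocks_add]
  | monomial k a =>
    simp [aeval_monomial, fromBlocks_diagonal_pow, Algebra.algebraMap_eq_smul_one,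
      ← fromBlocks_one, fromBlocks_smul, fromBlocks_multiply]

variable (A : Matrix m m R) (α β : R)

lemma aeval_fromBlocks_quadratic :
    aeval (fromBlocks (α • 1) A 1 (β • (1 : Matrix m m R))) ((X - C α) * (X - C β)) =
      fromBlocks A 0 0 A := by
  rw [map_mul, map_sub, map_sub, aeval_X, aeval_C, aeval_C, Algebra.algebraMap_eq_smul_one,
    Algebra.algebraMap_eq_smul_one, ← fromBlocks_one, fromBlocks_smul, fromBlocks_smul,
    sub_eq_add_neg, sub_eq_add_neg, fromBlocks_neg, fromBlocks_neg, fromBlocks_add, fromBlocks_add,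
    fromBlocks_multiply]
  congr 1 <;> simp

lemma aeval_fromBlocks_comp_quadratic_mulVec_inl (p : R[X]) (x : m → R) :
    aeval (fromBlocks (α • 1) A 1 (β • (1 : Matrix m m R)))
        (p.comp ((X - C α) * (X - C β))) *ᵥ Sum.elim x 0 =
      Sum.elim (aeval A p *ᵥ x) 0 := by
  rw [aeval_comp, aeval_fromBlocks_quadratic, aeval_fromBlocks_zero, fromBlocks_mulVec]
  simp

lemma aeval_fromBlocks_X_sub_C_mulVec_inl (x : m → R) :
    aeval (fromBlocks (α • 1) A 1 (β • (1 : Matrix m m R))) (X - C α) *ᵥ Sum.elim x 0 =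
      Sum.elim (0 : m → R) x := by
  ext (i | i) <;>
    simp [Algebra.algebraMap_eq_smul_one, sub_mulVec, smul_mulVec, fromBlocks_mulVec]

end Blocks

section BlockCompanion

variable {K : Type*} [Field K] {n : ℕ} [NeZero n] (P : K[X]) (α β : K)

lemma exists_aeval_fromBlocks_companion_mulVec_eq_single (b : Fin n ⊕ Fin n) :
    ∃ p : K[X], p.natDegree < 2 * n ∧
      aeval (fromBlocks (α • 1) (companion n P) 1 (β • 1) :
          Matrix (Fin n ⊕ Fin n) (Fin n ⊕ Fin n) K) p *ᵥ Sum.elim (Pi.single 0 1) 0 =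
        Pi.single b 1 := by
  have hq := (isMonicOfDegree_X_sub_one α).mul (isMonicOfDegree_X_sub_one β)
  have hpow (k : ℕ) (hk : k < n) :
      aeval (fromBlocks (α • 1) (companion n P) 1 (β • 1) :
          Matrix (Fin n ⊕ Fin n) (Fin n ⊕ Fin n) K)
          ((X ^ k).comp ((X - C α) * (X - C β))) *ᵥ Sum.elim (Pi.single 0 1) 0 =
        Sum.elim (Pi.single ⟨k, hk⟩ 1) 0 := by
    rw [aeval_fromBlocks_comp_quadratic_mulVec_inl, aeval_X_pow,
      companion_pow_mulVec_single_zero hk]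
  rcases b with ⟨k, hk⟩ | ⟨k, hk⟩
  · refine ⟨(X ^ k).comp ((X - C α) * (X - C β)), ?_, ?_⟩
    · rw [X_pow_comp, (hq.pow k).natDegree_eq]
      omega
    · rw [hpow k hk]
      ext (i | i) <;> simp [Pi.single_apply]
  · refine ⟨(X - C α) * (X ^ k).comp ((X - C α) * (X - C β)), ?_, ?_⟩
    · rw [X_pow_comp, ((isMonicOfDegree_X_sub_one α).mul (hq.pow k)).natDegree_eq]
      omega
    · rw [map_mul, ← mulVec_mulVec, hpow k hk, aeval_fromBlocks_X_sub_C_mulVec_inl]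
      ext (i | i) <;> simp [Pi.single_apply]

lemma aeval_fromBlocks_companion_comp_mulVec (hP : IsMonicOfDegree P n) :
    aeval (fromBlocks (α • 1) (companion n P) 1 (β • 1) :
        Matrix (Fin n ⊕ Fin n) (Fin n ⊕ Fin n) K) (P.comp ((X - C α) * (X - C β))) *ᵥ
      Sum.elim (Pi.single 0 1) 0 = 0 := by
  rw [aeval_fromBlocks_comp_quadratic_mulVec_inl, aeval_companion_mulVec_single_zero hP]
  ext (i | i) <;> rfl

end BlockCompanion

theorem stmt_5 {K : Type*} [Field K] {n : ℕ} (P : Polynomial K) (hP : P.Monic)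
    (hdeg : P.natDegree = n) (α β : K) :
    ((P.comp ((X - C α) * (X - C β))).Monic ∧ (P.comp ((X - C α) * (X - C β))).natDegree = 2 * n) ∧
    ∃ (e : (Fin n ⊕ Fin n) ≃ Fin (2 * n)) (S : Matrix (Fin (2 * n)) (Fin (2 * n)) K),
      IsUnit S ∧
      Matrix.reindex e e
          (Matrix.fromBlocks (α • 1) (companion n P) 1 (β • (1 : Matrix (Fin n) (Fin n) K))) =
        S * companion (2 * n) (P.comp ((X - C α) * (X - C β))) * S⁻¹ := by
  have hP' : IsMonicOfDegree P n := ⟨hdeg, hP⟩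
  have hQ := hP'.comp two_ne_zero
    ((isMonicOfDegree_X_sub_one α).mul (isMonicOfDegree_X_sub_one β))
  rw [show n * (1 + 1) = 2 * n by ring] at hQ
  refine ⟨⟨hQ.monic, hQ.natDegree_eq⟩, finSumFinEquiv.trans (finCongr (two_mul n).symm), ?_⟩
  rcases n.eq_zero_or_pos with rfl | hn
  · exact ⟨1, isUnit_one, Matrix.ext fun i => i.elim0⟩
  have : NeZero n := ⟨hn.ne'⟩
  obtain ⟨T, hT⟩ := exists_krylov_mul_eq_one
    (exists_aeval_fromBlocks_companion_mulVec_eq_single (n := n) P α β)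
  exact exists_isUnit_reindex_eq_mul_mul_inv _
    (mul_krylov_eq_krylov_mul_companion hQ (aeval_fromBlocks_companion_comp_mulVec P α β hP')) hT
end

section
/- Let P be a monic polynomial over a field K. Then the companion matrix of the polynomial P(t(t−1)) is the sum of an idempotent matrix and a square-zero matrix. -/
open Polynomial

/-!
The companion matrix of `Q = P(t(t-1))` is the matrix of multiplication by `x = t` on
`K[t]/(Q)` in the basis of powers of `x`. Put `s = x(x-1)`, so that `P(s) = 0` and
`x² = s + x`. Then the elements `s^i x^a` (`i < deg P`, `a < 2`) form another basis, and in it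
multiplication by `x` has the block form `[[0, s], [1, 1]]` over `K[s]/(P)`, i.e. the matrix
`1 ⊗ [[0, 0], [1, 1]] + C_P ⊗ [[0, 1], [0, 0]]`. The first summand is idempotent and the second
squares to zero; transporting both back to the basis of powers of `x` gives the decomposition.
-/

open Matrix Module
open scoped Kronecker

section

variable {K : Type*} [Field K]

section Companion

variable {S : Type*} [Ring S] [Algebra K S]

theorem sum_companion_smul_pow {P : K[X]} (hP : P.Monic) {x : S} (hx : aeval x P = 0)
    (j : Fin P.natDegree) :
    ∑ i, companion P.natDegree P i j • x ^ (i : ℕ) = x ^ ((j : ℕ) + 1) := by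
  by_cases hj : (j : ℕ) = P.natDegree - 1
  · have hn : (j : ℕ) + 1 = P.natDegree := by omega
    rw [aeval_eq_sum_range, Finset.sum_range_succ, hP.coeff_natDegree, one_smul,
      ← Fin.sum_univ_eq_sum_range (fun i => P.coeff i • x ^ i)] at hx
    simp only [companion, hj, if_true, neg_smul, Finset.sum_neg_distrib]
    rw [← hj, hn]
    exact neg_eq_of_add_eq_zero_right hx
  · have hlt : (j : ℕ) + 1 < P.natDegree := by omega
    simp only [companion, hj, if_false, ite_smul, one_smul, zero_smul]
    rw [Finset.sum_eq_single ⟨(j : ℕ) + 1, hlt⟩ (fun i _ hi => if_neg fun h => hi (Fin.ext h))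
      (by simp), if_pos rfl]

theorem LinearMap.toMatrixAlgEquiv_mulLeft_eq_companion {P : K[X]} (hP : P.Monic) {x : S}
    (hx : aeval x P = 0) (b : Basis (Fin P.natDegree) K S)
    (hb : ⇑b = fun i : Fin P.natDegree => x ^ (i : ℕ)) :
    LinearMap.toMatrixAlgEquiv b (LinearMap.mulLeft K x) = companion P.natDegree P := by
  rw [← LinearMap.toMatrixAlgEquiv_toLinAlgEquiv b (companion _ P)]
  congr 1
  refine b.ext fun j => ?_
  rw [toLinAlgEquiv_self, LinearMap.mulLeft_apply, hb]
  simp only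
  rw [← pow_succ', sum_companion_smul_pow hP hx]

end Companion

section Tower

variable (K) in
def idempotentPart (m : ℕ) : Matrix (Fin m × Fin 2) (Fin m × Fin 2) K :=
  1 ⊗ₖ !![0, 0; 1, 1]

def squareZeroPart (P : K[X]) :
    Matrix (Fin P.natDegree × Fin 2) (Fin P.natDegree × Fin 2) K :=
  companion P.natDegree P ⊗ₖ !![0, 1; 0, 0]

theorem isIdempotentElem_idempotentPart (m : ℕ) : IsIdempotentElem (idempotentPart K m) := by
  rw [IsIdempotentElem, idempotentPart, ← mul_kronecker_mul, one_mul, mul_fin_two]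
  simp

theorem squareZeroPart_mul_self (P : K[X]) : squareZeroPart P * squareZeroPart P = 0 := by
  have hE : !![(0 : K), 1; 0, 0] * !![0, 1; 0, 0] = 0 := by
    ext i j; fin_cases i <;> fin_cases j <;> simp
  rw [squareZeroPart, ← mul_kronecker_mul, hE, kronecker_zero]

theorem sum_kronecker_smul_mul {S : Type*} [Semiring S] [Algebra K S] {ι ι' κ κ' : Type*}
    [Fintype ι] [Fintype ι'] (M : Matrix ι κ K) (N : Matrix ι' κ' K) (u : ι → S) (v : ι' → S)
    (k : κ) (e : κ') :
    ∑ p, (M ⊗ₖ N) p (k, e) • (u p.1 * v p.2) = (∑ i, M i k • u i) * ∑ a, N a e • v a := by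
  simp only [Fintype.sum_prod_type, kronecker_apply, Finset.sum_mul_sum, smul_mul_smul_comm]

variable {S : Type*} [CommRing S] [Algebra K S]

def towerFamily (x : S) (m : ℕ) (p : Fin m × Fin 2) : S :=
  (x * (x - 1)) ^ (p.1 : ℕ) * x ^ (p.2 : ℕ)

theorem mul_towerFamily {P : K[X]} (hP : P.Monic) {x : S} (hx : aeval (x * (x - 1)) P = 0)
    (j : Fin P.natDegree × Fin 2) :
    x * towerFamily x P.natDegree j =
      ∑ i, (idempotentPart K P.natDegree + squareZeroPart P) i j • towerFamily x P.natDegree i := by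
  obtain ⟨k, e⟩ := j
  rw [idempotentPart, squareZeroPart]
  simp only [Matrix.add_apply, add_smul, Finset.sum_add_distrib, towerFamily]
  have hsplit := sum_kronecker_smul_mul (K := K) (k := k) (e := e)
    (u := fun i : Fin P.natDegree => (x * (x - 1)) ^ (i : ℕ)) (v := fun a : Fin 2 => x ^ (a : ℕ))
  rw [hsplit, hsplit, sum_companion_smul_pow hP hx]
  simp only [one_apply, ite_smul, one_smul, zero_smul, Finset.sum_ite_eq', Finset.mem_univ, if_true]
  fin_cases e <;> simp [Fin.sum_univ_two] <;> ring

section Powers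

variable {n : ℕ} (b : Basis (Fin n) K S) {x : S} (hb : ⇑b = fun i : Fin n => x ^ (i : ℕ))
include hb

theorem Submodule.eq_top_of_one_mem_of_mul_mem {W : Submodule K S} (h1 : (1 : S) ∈ W)
    (hmul : ∀ y ∈ W, x * y ∈ W) : W = ⊤ := by
  rw [eq_top_iff, ← b.span_eq, Submodule.span_le, hb]
  rintro _ ⟨i, rfl⟩
  suffices ∀ k : ℕ, x ^ k ∈ W from this i
  intro k
  induction k with
  | zero => simpa using h1
  | succ k ih => simpa [pow_succ'] using hmul _ ih

theorem span_towerFamily_eq_top {P : K[X]} (hP : P.Monic) (hx : aeval (x * (x - 1)) P = 0) :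
    Submodule.span K (Set.range (towerFamily x P.natDegree)) = ⊤ := by
  refine Submodule.eq_top_of_one_mem_of_mul_mem b hb ?_ fun y hy => ?_
  · rcases Nat.eq_zero_or_pos P.natDegree with h0 | hpos
    · -- `P = 1`, so `S` is the zero ring
      rw [hP.natDegree_eq_zero.mp h0, map_one] at hx
      simp [hx]
    · exact Submodule.subset_span ⟨(⟨0, hpos⟩, 0), by simp [towerFamily]⟩
  · refine Submodule.span_induction (fun z hz => ?_) (by simp) (fun a b _ _ ha hb => ?_)
      (fun c a _ ha => ?_) hy
    · obtain ⟨j, rfl⟩ := hz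
      rw [mul_towerFamily hP hx]
      exact Submodule.sum_mem _ fun i _ => Submodule.smul_mem _ _ (Submodule.subset_span ⟨i, rfl⟩)
    · rw [mul_add]
      exact Submodule.add_mem _ ha hb
    · rw [mul_smul_comm]
      exact Submodule.smul_mem _ _ ha

noncomputable def towerBasis {P : K[X]} (hP : P.Monic) (hx : aeval (x * (x - 1)) P = 0)
    (hn : n = P.natDegree * 2) : Basis (Fin P.natDegree × Fin 2) K S :=
  basisOfTopLeSpanOfCardEqFinrank (towerFamily x P.natDegree)
    (span_towerFamily_eq_top b hb hP hx).ge (by simp [finrank_eq_card_basis b, hn])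

theorem toLinAlgEquiv_towerBasis {P : K[X]} (hP : P.Monic) (hx : aeval (x * (x - 1)) P = 0)
    (hn : n = P.natDegree * 2) :
    toLinAlgEquiv (towerBasis b hb hP hx hn) (idempotentPart K P.natDegree + squareZeroPart P) =
      LinearMap.mulLeft K x := by
  refine (towerBasis b hb hP hx hn).ext fun j => ?_
  rw [toLinAlgEquiv_self, LinearMap.mulLeft_apply]
  simp only [towerBasis, coe_basisOfTopLeSpanOfCardEqFinrank]
  exact (mul_towerFamily hP hx j).symm

end Powers

end Tower

end

theorem stmt_6 {K : Type*} [Field K] (P : Polynomial K) (hP : P.Monic) :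
    ∃ A B : Matrix (Fin ((P.comp (X * (X - 1))).natDegree))
        (Fin ((P.comp (X * (X - 1))).natDegree)) K,
      A ^ 2 = A ∧ B ^ 2 = 0 ∧
      companion ((P.comp (X * (X - 1))).natDegree) (P.comp (X * (X - 1))) = A + B := by
  have hσ : (X * (X - 1) : K[X]).natDegree = 2 := by compute_degree!
  have hQ : (P.comp (X * (X - 1))).Monic :=
    hP.comp (monic_X.mul (monic_X_sub_C 1)) (by rw [hσ]; norm_num)
  set x := AdjoinRoot.root (P.comp (X * (X - 1)))
  let b : Basis (Fin (P.comp (X * (X - 1))).natDegree) K (AdjoinRoot (P.comp (X * (X - 1)))) :=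
    (AdjoinRoot.powerBasis' hQ).basis
  have hb : ⇑b = fun i : Fin _ => x ^ (i : ℕ) := (AdjoinRoot.powerBasis' hQ).coe_basis
  have hroot : aeval x (P.comp (X * (X - 1))) = 0 := by
    rw [AdjoinRoot.aeval_eq, AdjoinRoot.mk_self]
  have hx : aeval (x * (x - 1)) P = 0 := by simpa [aeval_comp] using hroot
  have hn : (P.comp (X * (X - 1))).natDegree = P.natDegree * 2 := by rw [natDegree_comp, hσ]
  let Φ := (toLinAlgEquiv (towerBasis b hb hP hx hn)).trans (LinearMap.toMatrixAlgEquiv b)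
  refine ⟨Φ (idempotentPart K P.natDegree), Φ (squareZeroPart P), ?_, ?_, ?_⟩
  · rw [sq, ← map_mul, isIdempotentElem_idempotentPart]
  · rw [sq, ← map_mul, squareZeroPart_mul_self, map_zero]
  · rw [← map_add, AlgEquiv.trans_apply, toLinAlgEquiv_towerBasis,
      LinearMap.toMatrixAlgEquiv_mulLeft_eq_companion hQ hroot b hb]
end

section
/- Let M ∈ Mat_n(K) be such that every invariant factor of M is a polynomial in t(t−1), i.e., M is similar to a direct sum of companion matrices C(P_i(t(t−1))) for monic polynomials P_i. Then M is the sum of an idempotent matrix and a square-zero matrix. -/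
/-!
Write `w = t(t - 1)`, `Q = P(w)` and `d = deg P`, so that `deg Q = 2d` and `C(Q)` is the matrix
of multiplication by `t` on `K[t]/(Q)` in the monomial basis. The polynomials `w^k, t w^k`
(`k < d`) have degrees `0, 1, …, 2d - 1`, so they form a basis related to the monomial one by a
unitriangular matrix. Since `t² = w + t`, multiplication by `t` has block matrix
`[[0, C(P)], [1, 1]]` in this basis, which is the sum of the idempotent `[[0, 0], [1, 1]]` and
the square-zero `[[0, C(P)], [0, 0]]`. Being such a sum is preserved by ring homomorphisms,
hence by similarity, reindexing and block-diagonal sums.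
-/

open Polynomial

open Matrix

def IsIdempotentAddSquareZero {R : Type*} [Semiring R] (x : R) : Prop :=
  ∃ a b : R, a ^ 2 = a ∧ b ^ 2 = 0 ∧ x = a + b

namespace IsIdempotentAddSquareZero

variable {R S : Type*} [Semiring R] [Semiring S] {x : R}

theorem map {F : Type*} [FunLike F R S] [RingHomClass F R S] (h : IsIdempotentAddSquareZero x)
    (f : F) : IsIdempotentAddSquareZero (f x) := by
  obtain ⟨a, b, ha, hb, rfl⟩ := h
  exact ⟨f a, f b, by rw [← map_pow, ha], by rw [← map_pow, hb, map_zero], map_add f a b⟩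

theorem units_conj (h : IsIdempotentAddSquareZero x) (u : Rˣ) :
    IsIdempotentAddSquareZero (u * x * ↑u⁻¹) :=
  h.map (MulSemiringAction.toRingHom (ConjAct Rˣ) R (ConjAct.toConjAct u))

theorem pi {ι : Type*} {A : ι → Type*} [∀ i, Semiring (A i)] {x : ∀ i, A i}
    (h : ∀ i, IsIdempotentAddSquareZero (x i)) : IsIdempotentAddSquareZero x := by
  choose a b ha hb hx using h
  exact ⟨a, b, funext ha, funext hb, funext hx⟩

end IsIdempotentAddSquareZero

theorem isIdempotentAddSquareZero_fromBlocks {m R : Type*} [Fintype m] [DecidableEq m]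
    [Semiring R] (C : Matrix m m R) :
    IsIdempotentAddSquareZero (fromBlocks 0 C 1 1 : Matrix (m ⊕ m) (m ⊕ m) R) :=
  ⟨fromBlocks 0 0 1 1, fromBlocks 0 C 0 0, by simp [sq, fromBlocks_multiply],
    by simp [sq, fromBlocks_multiply], by simp [fromBlocks_add]⟩

section coeffMatrix

variable {R ι : Type*}

def coeffMatrix [Semiring R] (n : ℕ) (q : ι → R[X]) : Matrix (Fin n) ι R :=
  of fun a j => (q j).coeff a

theorem coeffMatrix_mul {κ : Type*} [CommSemiring R] [Fintype ι] (n : ℕ) (q : ι → R[X])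
    (N : Matrix ι κ R) : coeffMatrix n q * N = coeffMatrix n fun j => ∑ i, N i j • q i := by
  ext a j
  simp [coeffMatrix, mul_apply, mul_comm]

theorem det_coeffMatrix_of_monic [CommRing R] {n : ℕ} (q : Fin n → R[X])
    (hq : ∀ b, (q b).Monic) (hdeg : ∀ b, (q b).natDegree = b) : (coeffMatrix n q).det = 1 := by
  have htri : (coeffMatrix n q).IsUpperTriangular := fun a b hab =>
    coeff_eq_zero_of_natDegree_lt (by rw [hdeg]; exact hab)
  rw [det_of_isUpperTriangular htri]
  refine Finset.prod_eq_one fun b _ => ?_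
  simpa [coeffMatrix, hdeg] using (hq b).coeff_natDegree

theorem companion_mul_coeffMatrix {K : Type*} [Field K] {n : ℕ} (Q : K[X]) (q : ι → K[X]) :
    companion n Q * coeffMatrix n q =
      coeffMatrix n fun j => X * q j - C ((q j).coeff (n - 1)) * Q := by
  ext a j
  obtain _ | m := n
  · exact a.elim0
  have hlast : companion (m + 1) Q a (Fin.last m) = -Q.coeff a := by simp [companion]
  have hshift : ∀ b : Fin m, companion (m + 1) Q a b.castSucc =
      if (a : ℕ) = b + 1 then 1 else 0 := fun b => by simp [companion, b.isLt.ne]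
  have hX : (X * q j).coeff a =
      ∑ b : Fin m, (if (a : ℕ) = b + 1 then 1 else 0) * (q j).coeff b := by
    cases a using Fin.cases with
    | zero => simp
    | succ a => simp [coeff_X_mul, Fin.val_inj]
  simp only [coeffMatrix, mul_apply, of_apply, Fin.sum_univ_castSucc, hlast, hshift, coeff_sub,
    coeff_C_mul, Fin.val_last, Fin.val_castSucc, hX, add_tsub_cancel_right]
  ring

end coeffMatrix

def finSumFinInterleave (d : ℕ) : Fin d ⊕ Fin d ≃ Fin (2 * d) where
  toFun := Sum.elim (fun k => ⟨2 * k, by omega⟩) (fun k => ⟨2 * k + 1, by omega⟩)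
  invFun a := if (a : ℕ) % 2 = 0 then .inl ⟨a / 2, by omega⟩ else .inr ⟨a / 2, by omega⟩
  left_inv := by rintro (k | k) <;> simp [Nat.mul_add_div]
  right_inv a := by by_cases h : (a : ℕ) % 2 = 0 <;> simp [h, Fin.ext_iff] <;> omega

theorem Polynomial.Monic.comp_eq_pow_add_sum {R : Type*} [CommSemiring R] {P : R[X]}
    (hP : P.Monic) (q : R[X]) :
    P.comp q = q ^ P.natDegree + ∑ i : Fin P.natDegree, P.coeff i • q ^ (i : ℕ) := by
  conv_lhs => rw [hP.as_sum]
  simp [add_comp, sum_comp, mul_comp, smul_eq_C_mul, Fin.sum_univ_eq_sum_range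
    (fun i => C (P.coeff i) * q ^ i)]

section evenOddBasis

variable {R : Type*} [CommRing R]

theorem monic_X_mul_X_sub_one : (X * (X - 1) : R[X]).Monic := by
  simpa using monic_X.mul (monic_X_sub_C (1 : R))

variable (R) in
noncomputable def evenOddBasis (d : ℕ) : Fin d ⊕ Fin d → R[X] :=
  Sum.elim (fun k => (X * (X - 1)) ^ (k : ℕ)) (fun k => X * (X * (X - 1)) ^ (k : ℕ))

theorem evenOddBasis_monic {d : ℕ} (j : Fin d ⊕ Fin d) : (evenOddBasis R d j).Monic := by
  cases j with
  | inl k => exact monic_X_mul_X_sub_one.pow _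
  | inr k => exact monic_X.mul (monic_X_mul_X_sub_one.pow _)

variable [Nontrivial R]

theorem natDegree_X_mul_X_sub_one : (X * (X - 1) : R[X]).natDegree = 2 := by
  rw [← C_1, monic_X.natDegree_mul (monic_X_sub_C 1), natDegree_X, natDegree_X_sub_C]

theorem natDegree_evenOddBasis {d : ℕ} (j : Fin d ⊕ Fin d) :
    (evenOddBasis R d j).natDegree = finSumFinInterleave d j := by
  cases j with
  | inl k =>
    simp only [evenOddBasis, finSumFinInterleave, Sum.elim_inl, Equiv.coe_fn_mk]
    rw [monic_X_mul_X_sub_one.natDegree_pow, natDegree_X_mul_X_sub_one, mul_comm]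
  | inr k =>
    simp only [evenOddBasis, finSumFinInterleave, Sum.elim_inr, Equiv.coe_fn_mk]
    rw [monic_X.natDegree_mul (monic_X_mul_X_sub_one.pow _),
      monic_X_mul_X_sub_one.natDegree_pow, natDegree_X_mul_X_sub_one, natDegree_X, add_comm,
      mul_comm]

end evenOddBasis

section companion

variable {K : Type*} [Field K]

theorem X_mul_evenOddBasis {P : K[X]} (hP : P.Monic) {d : ℕ} (hd : P.natDegree = d)
    (j : Fin d ⊕ Fin d) :
    X * evenOddBasis K d j -
        C ((evenOddBasis K d j).coeff (2 * d - 1)) * P.comp (X * (X - 1)) =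
      ∑ i, fromBlocks 0 (companion d P) 1 1 i j • evenOddBasis K d i := by
  have hlow : ∀ i, (finSumFinInterleave d i : ℕ) < 2 * d - 1 →
      (evenOddBasis K d i).coeff (2 * d - 1) = 0 := fun i hi =>
    coeff_eq_zero_of_natDegree_lt (by rwa [natDegree_evenOddBasis])
  rw [Fintype.sum_sum_type]
  cases j with
  | inl k =>
    rw [hlow _ (by simp [finSumFinInterleave]; omega)]
    simp [evenOddBasis, one_apply]
  | inr k =>
    simp only [fromBlocks_apply₁₂, fromBlocks_apply₂₂, one_apply, ite_smul, one_smul, zero_smul,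
      Finset.sum_ite_eq', Finset.mem_univ, if_true]
    have hkd := k.isLt
    by_cases hk : (k : ℕ) + 1 = d
    · -- `t · t w^(d-1) = w^d + t w^(d-1)`, and `Q` reduces `w^d` to `-∑ pᵢ wⁱ`
      have htop : (evenOddBasis K d (.inr k)).coeff (2 * d - 1) = 1 := by
        rw [← (evenOddBasis_monic (.inr k)).coeff_natDegree, natDegree_evenOddBasis]
        simp only [finSumFinInterleave, Equiv.coe_fn_mk, Sum.elim_inr]
        congr 1
        omega
      have hcol : ∀ i : Fin d, companion d P i k = -P.coeff i := fun i => by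
        simp [companion, ← hk]
      rw [htop, C_1, one_mul, hP.comp_eq_pow_add_sum, hd]
      simp only [hcol, neg_smul, Finset.sum_neg_distrib, evenOddBasis, Sum.elim_inl, Sum.elim_inr]
      rw [show (X * (X - 1) : K[X]) ^ d = X * (X - 1) * (X * (X - 1)) ^ (k : ℕ) by
        rw [← pow_succ', hk]]
      ring
    · rw [hlow _ (by simp [finSumFinInterleave]; omega)]
      have hcol : ∀ i : Fin d, companion d P i k = if i = ⟨k + 1, by omega⟩ then 1 else 0 :=
        fun i => by simp [companion, Fin.ext_iff]; omega
      simp only [hcol, ite_smul, one_smul, zero_smul, Finset.sum_ite_eq', Finset.mem_univ,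
        if_true, evenOddBasis, Sum.elim_inl, Sum.elim_inr, C_0, zero_mul, sub_zero]
      ring

theorem companion_comp_mul_coeffMatrix {P : K[X]} (hP : P.Monic) {d : ℕ}
    (hd : P.natDegree = d) :
    companion (2 * d) (P.comp (X * (X - 1))) * coeffMatrix (2 * d) (evenOddBasis K d) =
      coeffMatrix (2 * d) (evenOddBasis K d) *
        (fromBlocks 0 (companion d P) 1 1 : Matrix (Fin d ⊕ Fin d) (Fin d ⊕ Fin d) K) := by
  rw [companion_mul_coeffMatrix, coeffMatrix_mul]
  exact congrArg _ (funext (X_mul_evenOddBasis hP hd))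

theorem isIdempotentAddSquareZero_companion_comp {P : K[X]} (hP : P.Monic) :
    IsIdempotentAddSquareZero
      (companion (P.comp (X * (X - 1))).natDegree (P.comp (X * (X - 1)))) := by
  obtain ⟨d, hd⟩ : ∃ d, P.natDegree = d := ⟨_, rfl⟩
  rw [natDegree_comp, natDegree_X_mul_X_sub_one, hd, mul_comm]
  set e := finSumFinInterleave d
  set C := companion (2 * d) (P.comp (X * (X - 1)))
  set S := coeffMatrix (2 * d) (evenOddBasis K d)
  set N : Matrix (Fin d ⊕ Fin d) (Fin d ⊕ Fin d) K := fromBlocks 0 (companion d P) 1 1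
  set T := coeffMatrix (2 * d) (evenOddBasis K d ∘ e.symm)
  have hT : IsUnit T := by
    have hdet : T.det = 1 := det_coeffMatrix_of_monic _ (fun b => evenOddBasis_monic _)
      fun b => by simp [natDegree_evenOddBasis, e]
    simp [isUnit_iff_isUnit_det, hdet]
  have hCT : C * hT.unit = hT.unit * reindex e e N :=
    calc C * T = (C * S).submatrix id e.symm := rfl
      _ = (S * N).submatrix id e.symm := by rw [companion_comp_mul_coeffMatrix hP hd]
      _ = T * reindex e e N := (submatrix_mul_equiv S N id e.symm e.symm).symm
  rw [(Units.eq_mul_inv_iff_mul_eq hT.unit).mpr hCT]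
  exact ((isIdempotentAddSquareZero_fromBlocks _).map (reindexAlgEquiv K K e)).units_conj _

end companion

theorem stmt_7 {K : Type*} [Field K] {n : ℕ} (M : Matrix (Fin n) (Fin n) K)
    (h : ∃ (k : ℕ) (P : Fin k → Polynomial K), (∀ i, (P i).Monic) ∧
      ∃ (e : Fin n ≃ (Σ i : Fin k, Fin (((P i).comp (X * (X - 1))).natDegree)))
        (R : Matrix (Fin n) (Fin n) K), IsUnit R ∧
        M = R * (Matrix.reindex e.symm e.symm (Matrix.blockDiagonal'
          (fun i => companion (((P i).comp (X * (X - 1))).natDegree)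
            ((P i).comp (X * (X - 1)))))) * R⁻¹) :
    ∃ A B : Matrix (Fin n) (Fin n) K, A ^ 2 = A ∧ B ^ 2 = 0 ∧ M = A + B := by
  obtain ⟨k, P, hP, e, R, hR, rfl⟩ := h
  have hblocks := (IsIdempotentAddSquareZero.pi fun i =>
    isIdempotentAddSquareZero_companion_comp (hP i)).map (blockDiagonal'RingHom _ K)
  have hconj := (hblocks.map (reindexAlgEquiv K K e.symm)).units_conj hR.unit
  rwa [coe_units_inv, hR.unit_spec] at hconj
end

section
/- Let M = A + B ∈ Mat_n(K) with A² = A, B² = 0, and suppose M and M − I are both invertible. Then n is even and dim ker A = dim ker(A − I) = dim ker B = rank B = n/2, and K^n = ker A ⊕ ker B. -/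
open Module LinearMap Matrix

theorem stmt_9 {K : Type*} [Field K] {n : ℕ} (A B : Matrix (Fin n) (Fin n) K)
    (hA : A ^ 2 = A) (hB : B ^ 2 = 0)
    (h1 : IsUnit (A + B)) (h2 : IsUnit (A + B - 1)) :
    Even n ∧
    Module.finrank K (LinearMap.ker A.mulVecLin) = n / 2 ∧
    Module.finrank K (LinearMap.ker (A - 1).mulVecLin) = n / 2 ∧
    Module.finrank K (LinearMap.ker B.mulVecLin) = n / 2 ∧
    B.rank = n / 2 ∧
    IsCompl (LinearMap.ker A.mulVecLin) (LinearMap.ker B.mulVecLin) := by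
  have hAA : A * A = A := by rw [← pow_two]; exact hA
  have hBB : B * B = 0 := by rw [← pow_two]; exact hB
  have htop : finrank K (Fin n → K) = n := Module.finrank_fin_fun K
  -- disjointness 1 : ker A ⊓ ker B = ⊥
  have hinj1 : Function.Injective (A + B).mulVec := mulVec_injective_iff_isUnit.2 h1
  have hdisj1 : Disjoint (LinearMap.ker A.mulVecLin) (LinearMap.ker B.mulVecLin) := by
    rw [disjoint_iff_inf_le]
    rintro x ⟨hx1, hx2⟩
    replace hx1 : A *ᵥ x = 0 := hx1
    replace hx2 : B *ᵥ x = 0 := hx2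
    have : (A + B).mulVec x = (A + B).mulVec 0 := by
      simp [Matrix.add_mulVec, hx1, hx2]
    simpa using hinj1 this
  -- disjointness 2 : ker (A-1) ⊓ ker B = ⊥
  have hinj2 : Function.Injective (A + B - 1).mulVec := mulVec_injective_iff_isUnit.2 h2
  have hdisj2 : Disjoint (LinearMap.ker (A - 1).mulVecLin) (LinearMap.ker B.mulVecLin) := by
    rw [disjoint_iff_inf_le]
    rintro x ⟨hx1, hx2⟩
    replace hx1 : (A - 1) *ᵥ x = 0 := hx1
    replace hx2 : B *ᵥ x = 0 := hx2
    have : (A + B - 1).mulVec x = (A + B - 1).mulVec 0 := by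
      have h : A + B - 1 = (A - 1) + B := by abel
      simp [h, Matrix.add_mulVec, hx1, hx2]
    simpa using hinj2 this
  have hle1 : finrank K (LinearMap.ker A.mulVecLin) +
      finrank K (LinearMap.ker B.mulVecLin) ≤ n := by
    have := Submodule.finrank_add_finrank_le_of_disjoint hdisj1
    rwa [htop] at this
  have hle2 : finrank K (LinearMap.ker (A - 1).mulVecLin) +
      finrank K (LinearMap.ker B.mulVecLin) ≤ n := by
    have := Submodule.finrank_add_finrank_le_of_disjoint hdisj2
    rwa [htop] at this
  -- rank-nullity for B
  have hrnB : B.rank + finrank K (LinearMap.ker B.mulVecLin) = n := by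
    rw [Matrix.rank]
    have := LinearMap.finrank_range_add_finrank_ker B.mulVecLin
    rwa [htop] at this
  -- range B ≤ ker B
  have hrangeB : LinearMap.range B.mulVecLin ≤ LinearMap.ker B.mulVecLin := by
    rintro x ⟨y, rfl⟩
    show B *ᵥ (B *ᵥ y) = 0
    rw [Matrix.mulVec_mulVec, hBB, Matrix.zero_mulVec]
  have h2b : n ≤ finrank K (LinearMap.ker B.mulVecLin) +
      finrank K (LinearMap.ker B.mulVecLin) := by
    have : B.rank ≤ finrank K (LinearMap.ker B.mulVecLin) :=
      Submodule.finrank_mono hrangeB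
    omega
  -- ker A ⊔ ker (A-1) = ⊤
  have hsup : LinearMap.ker A.mulVecLin ⊔ LinearMap.ker (A - 1).mulVecLin = ⊤ := by
    rw [eq_top_iff]
    intro x _
    rw [Submodule.mem_sup]
    refine ⟨x - A.mulVec x, ?_, A.mulVec x, ?_, by abel⟩
    · show A *ᵥ (x - A *ᵥ x) = 0
      rw [Matrix.mulVec_sub, Matrix.mulVec_mulVec, hAA, sub_self]
    · show (A - 1) *ᵥ (A *ᵥ x) = 0
      rw [Matrix.mulVec_mulVec, Matrix.sub_mul, hAA, Matrix.one_mul, sub_self,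
        Matrix.zero_mulVec]
  have hgesup : n ≤ finrank K (LinearMap.ker A.mulVecLin) +
      finrank K (LinearMap.ker (A - 1).mulVecLin) := by
    have := Submodule.finrank_sup_add_finrank_inf_eq (LinearMap.ker A.mulVecLin)
      (LinearMap.ker (A - 1).mulVecLin)
    rw [hsup, finrank_top, htop] at this
    omega
  have heven : Even n := by
    refine ⟨finrank K (LinearMap.ker B.mulVecLin), by omega⟩
  refine ⟨heven, by omega, by omega, by omega, by omega, ?_⟩
  refine ⟨hdisj1, ?_⟩
  rw [codisjoint_iff]
  apply Submodule.eq_top_of_disjoint _ _ _ hdisj1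
  rw [htop]; omega
end

section
/- Let M = A + B ∈ Mat_n(K) with A² = A, B² = 0, and suppose M and M − I are both invertible. Then n = 2p is even and M is similar to a block matrix [[I_p, D],[I_p, 0_p]] for some p×p matrix D. -/
/-!
Let `a`, `b` be the endomorphisms of `K ^ n` given by `A`, `B`. Injectivity of `M = a + b` and of
`M - 1` says that `ker b` meets neither `ker a` nor `range a = {x | a x = x}`. Since
`range b ≤ ker b`, counting dimensions forces `n = 2p` with `p = rank a`. If `u` is a basis of
`range a`, then `u, b u` is a basis of `K ^ n`, and in it `M u = u + b u` while
`M (b u) = a (b u) ∈ range a`; this is the block matrix `[[1, D], [1, 0]]`.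
-/

open Module Submodule LinearMap Matrix

section Semiring

variable {R V : Type*} [Semiring R] [AddCommMonoid V] [Module R V]

theorem Module.End.range_le_ker_of_sq_eq_zero {b : Module.End R V} (hb : b ^ 2 = 0) :
    range b ≤ ker b :=
  range_le_ker_iff.mpr (by rwa [← Module.End.mul_eq_comp, ← sq])

theorem LinearMap.disjoint_ker_ker_of_injective_add {a b : Module.End R V}
    (h : Function.Injective ⇑(a + b)) : Disjoint (ker a) (ker b) := by
  rw [disjoint_def]
  intro x ha hb
  apply h
  simp_all

end Semiring

section Ring

variable {R V : Type*} [Ring R] [AddCommGroup V] [Module R V]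

theorem LinearMap.disjoint_range_ker_of_injective_add_sub_one {a b : Module.End R V}
    (ha : IsIdempotentElem a) (h : Function.Injective ⇑(a + b - 1)) :
    Disjoint (range a) (ker b) := by
  rw [disjoint_def]
  intro x hxa hb
  rw [ha.mem_range_iff] at hxa
  apply h
  simp_all

theorem LinearIndependent.sumElim_comp_of_sq_eq_zero {ι : Type*} {u : ι → V}
    {b : Module.End R V} (hu : LinearIndependent R u) (hb : b ^ 2 = 0)
    (hdisj : Disjoint (span R (Set.range u)) (ker b)) :
    LinearIndependent R (Sum.elim u (b ∘ u)) := by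
  refine hu.sum_type (hu.map hdisj) (hdisj.mono_right ?_)
  rw [span_le]
  rintro _ ⟨i, rfl⟩
  exact Module.End.range_le_ker_of_sq_eq_zero hb (mem_range_self b (u i))

end Ring

section CommRing

variable {R V : Type*} [CommRing R] [AddCommGroup V] [Module R V]

theorem LinearMap.toMatrix_eq_fromBlocks_one_one_zero {ι : Type*} [Fintype ι] [DecidableEq ι]
    (w : Basis (ι ⊕ ι) R V) (f : Module.End R V) (D : Matrix ι ι R)
    (h₁ : ∀ j, f (w (.inl j)) = w (.inl j) + w (.inr j))
    (h₂ : ∀ j, f (w (.inr j)) = ∑ i, D i j • w (.inl i)) :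
    toMatrix w w f = fromBlocks 1 D 1 0 := by
  apply (Matrix.toLin w w).injective
  rw [Matrix.toLin_toMatrix]
  refine w.ext fun j => ?_
  rw [Matrix.toLin_self]
  rcases j with j | j <;> simp [Fintype.sum_sum_type, h₁, h₂, Matrix.one_apply]

theorem LinearMap.toMatrix_basis_reindex {ι κ : Type*} [Fintype ι] [DecidableEq ι] [Fintype κ]
    [DecidableEq κ] (w : Basis ι R V) (e : ι ≃ κ) (f : Module.End R V) :
    toMatrix (w.reindex e) (w.reindex e) f = reindex e e (toMatrix w w f) := by
  ext i j
  simp [toMatrix_apply]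

theorem Matrix.exists_isUnit_eq_mul_toMatrix_toLin'_mul_inv {ι : Type*} [Fintype ι]
    [DecidableEq ι] (M : Matrix ι ι R) (w : Basis ι R (ι → R)) :
    ∃ P : Matrix ι ι R, IsUnit P ∧ M = P * toMatrix w w (toLin' M) * P⁻¹ := by
  set e := Pi.basisFun R ι
  have hP : e.toMatrix w * w.toMatrix e = 1 := e.toMatrix_mul_toMatrix_flip w
  refine ⟨e.toMatrix w, (isUnit_iff_isUnit_det _).mpr (isUnit_det_of_right_inverse hP), ?_⟩
  rw [inv_eq_right_inv hP, basis_toMatrix_mul_linearMap_toMatrix_mul_basis_toMatrix,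
    toMatrix_eq_toMatrix', toMatrix'_toLin']

end CommRing

section Field

variable {K V : Type*} [Field K] [AddCommGroup V] [Module K V] [FiniteDimensional K V]

theorem LinearMap.two_mul_finrank_range_eq_of_disjoint {a b : Module.End K V} (hb : b ^ 2 = 0)
    (hker : Disjoint (ker a) (ker b)) (hrange : Disjoint (range a) (ker b)) :
    2 * finrank K (range a) = finrank K V := by
  have := finrank_range_add_finrank_ker a
  have := finrank_range_add_finrank_ker b
  have := finrank_mono (Module.End.range_le_ker_of_sq_eq_zero hb)
  have := finrank_add_finrank_le_of_disjoint hker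
  have := finrank_add_finrank_le_of_disjoint hrange
  omega

theorem LinearMap.exists_basis_toMatrix_add_eq_fromBlocks {ι : Type*} [Fintype ι] [DecidableEq ι]
    {a b : Module.End K V} (ha : IsIdempotentElem a) (hb : b ^ 2 = 0)
    (hrange : Disjoint (range a) (ker b)) (hdim : 2 * finrank K (range a) = finrank K V)
    (u : Basis ι K (range a)) :
    ∃ (w : Basis (ι ⊕ ι) K V) (D : Matrix ι ι K), toMatrix w w (a + b) = fromBlocks 1 D 1 0 := by
  set u' : ι → V := (↑) ∘ u
  have hu' : LinearIndependent K u' := u.linearIndependent.map' _ (range a).ker_subtype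
  have hspan : span K (Set.range u') ≤ range a :=
    span_le.mpr (by rintro _ ⟨i, rfl⟩; exact (u i).2)
  have hcard : Fintype.card (ι ⊕ ι) = finrank K V := by
    rw [Fintype.card_sum, ← finrank_eq_card_basis u]; omega
  let w := basisOfLinearIndependentOfCardEqFinrank' _
    (hu'.sumElim_comp_of_sq_eq_zero hb (hrange.mono_left hspan)) hcard
  let D : Matrix ι ι K := fun i j => u.repr ⟨a (b (u j)), mem_range_self a _⟩ i
  refine ⟨w, D, toMatrix_eq_fromBlocks_one_one_zero w _ D (fun j => ?_) (fun j => ?_)⟩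
  · simp [w, u', ha.mem_range_iff.mp (u j).2]
  · have hbb : b (b (u j)) = 0 :=
      Module.End.range_le_ker_of_sq_eq_zero hb (mem_range_self b _)
    have hrepr := congrArg Subtype.val (u.sum_repr ⟨a (b (u j)), mem_range_self a _⟩)
    rw [Submodule.coe_sum] at hrepr
    simpa [w, u', D, hbb] using hrepr.symm

end Field

theorem stmt_10 {K : Type*} [Field K] {n : ℕ} (M A B : Matrix (Fin n) (Fin n) K)
    (hM : M = A + B) (hA : A ^ 2 = A) (hB : B ^ 2 = 0)
    (h1 : IsUnit M) (h2 : IsUnit (M - 1)) :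
    ∃ (p : ℕ) (h : n = p + p) (D : Matrix (Fin p) (Fin p) K)
      (R : Matrix (Fin n) (Fin n) K), IsUnit R ∧
      M = R * (Matrix.reindex (finSumFinEquiv.trans (finCongr h.symm))
        (finSumFinEquiv.trans (finCongr h.symm))
        (Matrix.fromBlocks 1 D 1 0)) * R⁻¹ := by
  set a := toLinAlgEquiv' A
  set b := toLinAlgEquiv' B
  have ha : IsIdempotentElem a := by rw [IsIdempotentElem, ← map_mul, ← sq, hA]
  have hb : b ^ 2 = 0 := by rw [← map_pow, hB, map_zero]
  have hab : a + b = toLin' M := by rw [hM, map_add]; rfl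
  have hinj : Function.Injective ⇑(a + b) := by
    rw [hab]; exact mulVec_injective_iff_isUnit.mpr h1
  have hinj' : Function.Injective ⇑(a + b - 1) := by
    rw [hab, Module.End.one_eq_id, ← toLin'_one, ← map_sub]
    exact mulVec_injective_iff_isUnit.mpr h2
  have hrange := disjoint_range_ker_of_injective_add_sub_one ha hinj'
  have hdim := two_mul_finrank_range_eq_of_disjoint hb
    (disjoint_ker_ker_of_injective_add hinj) hrange
  set p := finrank K (range a)
  have hn : n = p + p := by rw [finrank_fin_fun] at hdim; omega
  obtain ⟨w, D, hD⟩ := exists_basis_toMatrix_add_eq_fromBlocks ha hb hrange hdim (finBasis K _)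
  obtain ⟨R, hR, hMR⟩ := exists_isUnit_eq_mul_toMatrix_toLin'_mul_inv M
    (w.reindex (finSumFinEquiv.trans (finCongr hn.symm)))
  refine ⟨p, hn, D, R, hR, ?_⟩
  rwa [toMatrix_basis_reindex, ← hab, hD] at hMR
end

section
/- Let M ∈ Mat_n(K) with M³(M − I)³ = 0, and suppose M = A + B where A² = A and B² = 0. Write n_k(M, λ) = dim ker(M − λI)^k − dim ker(M − λI)^{k−1}. Then n_3(M, 0) ≤ n_1(M, 1) and n_3(M, 1) ≤ n_1(M, 0). -/
set_option maxHeartbeats 1000000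

open Module LinearMap Matrix

section Aux

variable {K : Type*} [Field K] {n : ℕ}

private lemma aux_dim_le (X : Matrix (Fin n) (Fin n) K)
    {V₁ V₂ W : Submodule K (Fin n → K)}
    (hmem : ∀ v ∈ V₁, X.mulVec v ∈ V₂)
    (hker : ∀ v ∈ V₁, X.mulVec v = 0 → v ∈ W) :
    Module.finrank K V₁ ≤ Module.finrank K V₂ + Module.finrank K W := by
  let g : V₁ →ₗ[K] V₂ :=
    LinearMap.codRestrict V₂ (X.mulVecLin.comp V₁.subtype) (fun v => hmem v.1 v.2)
  have h1 : finrank K (range g) + finrank K (ker g) = finrank K V₁ :=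
    LinearMap.finrank_range_add_finrank_ker g
  have h2 : finrank K (range g) ≤ finrank K V₂ := (range g).finrank_le
  have h3 : finrank K (ker g) ≤ finrank K W := by
    have hj : ∀ z : ker g, (z.1.1 : Fin n → K) ∈ W := by
      intro z
      refine hker z.1.1 z.1.2 ?_
      have hz := z.2
      rw [LinearMap.mem_ker] at hz
      exact congrArg Subtype.val hz
    let j : ker g →ₗ[K] W :=
      LinearMap.codRestrict W ((V₁.subtype).comp (ker g).subtype) (fun z => hj z)
    have hinj : Function.Injective j := by
      intro a b hab
      have h1 := congrArg (fun t : W => (t : Fin n → K)) hab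
      exact Subtype.ext (Subtype.ext h1)
    exact LinearMap.finrank_le_finrank_of_injective hinj
  omega

private lemma mem_range_idem {A : Matrix (Fin n) (Fin n) K} (hA : A * A = A)
    {v : Fin n → K} (hv : v ∈ range A.mulVecLin) : A.mulVec v = v := by
  obtain ⟨w, rfl⟩ := hv
  rw [Matrix.mulVecLin_apply, Matrix.mulVec_mulVec, hA]

private theorem core (A B : Matrix (Fin n) (Fin n) K) (hA : A * A = A) (hB : B * B = 0)
    (hC3 : ((A + B) * (A + B) - (A + B)) ^ 3 = 0) :
    finrank K (ker ((A + B) ^ 3).mulVecLin) ≤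
      finrank K (ker ((A + B) - 1).mulVecLin) + finrank K (ker ((A + B) ^ 2).mulVecLin) := by
  have hA' : ∀ x : Matrix (Fin n) (Fin n) K, A * (A * x) = A * x := fun x => by
    rw [← mul_assoc, hA]
  have hB' : ∀ x : Matrix (Fin n) (Fin n) K, B * (B * x) = 0 := fun x => by
    rw [← mul_assoc, hB, zero_mul]
  set C : Matrix (Fin n) (Fin n) K := A * B + B * A - B with hC
  set Pm : Matrix (Fin n) (Fin n) K := A * B * A with hP
  set Qm : Matrix (Fin n) (Fin n) K := A * B - A * B * A with hQ
  set Rm : Matrix (Fin n) (Fin n) K := B * A - A * B * A with hR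
  set Sm : Matrix (Fin n) (Fin n) K := B - A * B - B * A + A * B * A with hS
  set Tm : Matrix (Fin n) (Fin n) K := Sm * Sm with hT
  set D2 : Matrix (Fin n) (Fin n) K := (1 - 2 • Pm + 4 • (Pm * Pm)) * Qm with hD2
  set Em : Matrix (Fin n) (Fin n) K := (1 + Sm + Sm * Sm) * Rm with hE
  have hC3' : C * (C * C) = 0 := by
    have h1 : C * (C * C) = ((A + B) * (A + B) - (A + B)) ^ 3 := by
      simp only [hC, pow_succ, pow_zero, one_mul, mul_add, add_mul, mul_sub, sub_mul,
        mul_assoc, mul_one, hA, hB, hA', hB', mul_zero, zero_mul, add_zero, zero_add,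
        sub_zero, zero_sub, mul_neg, neg_mul]
      abel
    rw [h1, hC3]
  -- identities
  have e1 : (1 - 3 • Pm + 8 • (Pm * Pm)) * (A * ((A + B) * ((A + B) * (A + B))) * A) = A := by
    have h : (1 - 3 • Pm + 8 • (Pm * Pm)) * (A * ((A + B) * ((A + B) * (A + B))) * A)
        = A + 21 • ((C * (C * C)) * A) + 8 • ((C * (C * C)) * Pm) := by
      simp only [hP, hC, mul_add, add_mul, mul_sub, sub_mul, mul_assoc,
      mul_one, one_mul, hA, hB, hA', hB', mul_zero, zero_mul, add_zero, zero_add,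
      sub_zero, zero_sub, mul_neg, neg_mul, neg_neg, neg_add_rev, smul_mul_assoc,
      mul_smul_comm, smul_add, smul_sub, smul_neg]
      abel
    rw [h, hC3', zero_mul, zero_mul, smul_zero, smul_zero, add_zero, add_zero]
  have e2 : ((A + B) * (A + B)) * ((1 - D2) * (1 - A)) = Tm := by
    have h : ((A + B) * (A + B)) * ((1 - D2) * (1 - A))
        = Tm + (C * (C * C)) * (2 • A + 4 • (B * A) + 4 • (A * B * A)
            - 2 • (1 : Matrix (Fin n) (Fin n) K) - 4 • B - 4 • (A * B)) := by
      simp only [hD2, hQ, hP, hT, hS, hC, mul_add, add_mul, mul_sub, sub_mul, mul_assoc,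
      mul_one, one_mul, hA, hB, hA', hB', mul_zero, zero_mul, add_zero, zero_add,
      sub_zero, zero_sub, mul_neg, neg_mul, neg_neg, neg_add_rev, smul_mul_assoc,
      mul_smul_comm, smul_add, smul_sub, smul_neg]
      abel
    rw [h, hC3', zero_mul, add_zero]
  have e3 : ((A + B) - 1) * ((1 + Em) * A) = Pm - Pm * Pm := by
    have h : ((A + B) - 1) * ((1 + Em) * A)
        = Pm - Pm * Pm + (C * (C * C)) * (A - B * A) := by
      simp only [hE, hR, hP, hS, hC, mul_add, add_mul, mul_sub, sub_mul, mul_assoc,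
      mul_one, one_mul, hA, hB, hA', hB', mul_zero, zero_mul, add_zero, zero_add,
      sub_zero, zero_sub, mul_neg, neg_mul, neg_neg, neg_add_rev, smul_mul_assoc,
      mul_smul_comm, smul_add, smul_sub, smul_neg]
      abel
    rw [h, hC3', zero_mul, add_zero]
  have e4 : Pm * Qm = -(Qm * Sm) := by
    simp only [hP, hQ, hS, mul_add, add_mul, mul_sub, sub_mul, mul_assoc,
      mul_one, one_mul, hA, hB, hA', hB', mul_zero, zero_mul, add_zero, zero_add,
      sub_zero, zero_sub, mul_neg, neg_mul, neg_neg, neg_add_rev, smul_mul_assoc,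
      mul_smul_comm, smul_add, smul_sub, smul_neg]
    abel
  have e5 : Tm = -(Rm * Qm) := by
    simp only [hT, hS, hR, hQ, mul_add, add_mul, mul_sub, sub_mul, mul_assoc,
      mul_one, one_mul, hA, hB, hA', hB', mul_zero, zero_mul, add_zero, zero_add,
      sub_zero, zero_sub, mul_neg, neg_mul, neg_neg, neg_add_rev, smul_mul_assoc,
      mul_smul_comm, smul_add, smul_sub, smul_neg]
    abel
  have e6 : Sm * Tm = 0 := by
    have h : Sm * Tm = (C * (C * C)) * A - (C * (C * C)) := by
      simp only [hT, hS, hC, mul_add, add_mul, mul_sub, sub_mul, mul_assoc,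
      mul_one, one_mul, hA, hB, hA', hB', mul_zero, zero_mul, add_zero, zero_add,
      sub_zero, zero_sub, mul_neg, neg_mul, neg_neg, neg_add_rev, smul_mul_assoc,
      mul_smul_comm, smul_add, smul_sub, smul_neg]
      abel
    rw [h, hC3', zero_mul, sub_zero]
  have e7 : A * Sm = 0 := by
    simp only [hS, mul_add, add_mul, mul_sub, sub_mul, mul_assoc,
      mul_one, one_mul, hA, hB, hA', hB', mul_zero, zero_mul, add_zero, zero_add,
      sub_zero, zero_sub, mul_neg, neg_mul, neg_neg, neg_add_rev, smul_mul_assoc,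
      mul_smul_comm, smul_add, smul_sub, smul_neg]
    abel
  have e9 : A * Qm = Qm := by
    simp only [hQ, mul_add, add_mul, mul_sub, sub_mul, mul_assoc,
      mul_one, one_mul, hA, hB, hA', hB', mul_zero, zero_mul, add_zero, zero_add,
      sub_zero, zero_sub, mul_neg, neg_mul, neg_neg, neg_add_rev, smul_mul_assoc,
      mul_smul_comm, smul_add, smul_sub, smul_neg]
  have e12 : (1 - A) * ((1 - D2) * (1 - A)) = 1 - A := by
    simp only [hD2, hQ, hP, mul_add, add_mul, mul_sub, sub_mul, mul_assoc,
      mul_one, one_mul, hA, hB, hA', hB', mul_zero, zero_mul, add_zero, zero_add,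
      sub_zero, zero_sub, mul_neg, neg_mul, neg_neg, neg_add_rev, smul_mul_assoc,
      mul_smul_comm, smul_add, smul_sub, smul_neg]
    abel
  have e13 : A * ((1 + Em) * A) = A := by
    simp only [hE, hR, hS, mul_add, add_mul, mul_sub, sub_mul, mul_assoc,
      mul_one, one_mul, hA, hB, hA', hB', mul_zero, zero_mul, add_zero, zero_add,
      sub_zero, zero_sub, mul_neg, neg_mul, neg_neg, neg_add_rev, smul_mul_assoc,
      mul_smul_comm, smul_add, smul_sub, smul_neg]
    abel
  have e14 : Tm * A = 0 := by
    simp only [hT, hS, mul_add, add_mul, mul_sub, sub_mul, mul_assoc,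
      mul_one, one_mul, hA, hB, hA', hB', mul_zero, zero_mul, add_zero, zero_add,
      sub_zero, zero_sub, mul_neg, neg_mul, neg_neg, neg_add_rev, smul_mul_assoc,
      mul_smul_comm, smul_add, smul_sub, smul_neg]
    abel
  have eA0 : A * (1 - A) = 0 := by rw [mul_sub, mul_one, hA, sub_self]
  -- power rewrites
  have hpow3 : (A + B) ^ 3 = (A + B) * (A + B) * (A + B) := by
    rw [pow_succ, pow_succ, pow_one]
  have hpow2 : (A + B) ^ 2 = (A + B) * (A + B) := pow_two (A + B)
  -- membership helpers
  have memker : ∀ (X : Matrix (Fin n) (Fin n) K) (v : Fin n → K),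
      v ∈ ker X.mulVecLin ↔ X.mulVec v = 0 := fun X v => by
    rw [LinearMap.mem_ker, Matrix.mulVecLin_apply]
  have memrange : ∀ v : Fin n → K, A.mulVec v = v → v ∈ range A.mulVecLin :=
    fun v h => ⟨v, by rw [Matrix.mulVecLin_apply, h]⟩
  -- submodules
  set kerA := ker A.mulVecLin with hkerA
  set Zs := range A.mulVecLin ⊓ ker Pm.mulVecLin with hZs
  set Ks := kerA ⊓ ker Qm.mulVecLin with hKs
  set Ys := kerA ⊓ ker (Qm * Sm).mulVecLin with hYs
  set Ws := kerA ⊓ ker Tm.mulVecLin with hWs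
  -- Step 1 : dim ker M³ ≤ dim ker A
  have step1 : finrank K (ker ((A + B) ^ 3).mulVecLin) ≤
      finrank K kerA + finrank K (⊥ : Submodule K (Fin n → K)) := by
    apply aux_dim_le (1 - A)
    · intro v _
      rw [hkerA, memker, Matrix.mulVec_mulVec, eA0, Matrix.zero_mulVec]
    · intro v hv h0
      have hAv : A.mulVec v = v := by
        rw [Matrix.sub_mulVec, Matrix.one_mulVec, sub_eq_zero] at h0
        exact h0.symm
      rw [memker, hpow3] at hv
      have hv3 : (A + B) *ᵥ ((A + B) *ᵥ ((A + B) *ᵥ v)) = 0 := by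
        rw [Matrix.mulVec_mulVec, Matrix.mulVec_mulVec]; exact hv
      have key := congrArg (fun X : Matrix (Fin n) (Fin n) K => X.mulVec v) e1
      simp only [← Matrix.mulVec_mulVec] at key
      rw [hAv, hv3, Matrix.mulVec_zero, Matrix.mulVec_zero] at key
      rw [Submodule.mem_bot]
      exact key.symm
  -- Step 2 : dim ker Tm ≤ dim ker M² + dim range A
  have step2 : finrank K (ker Tm.mulVecLin) ≤
      finrank K (ker ((A + B) ^ 2).mulVecLin) + finrank K (range A.mulVecLin) := by
    apply aux_dim_le ((1 - D2) * (1 - A))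
    · intro v hv
      rw [memker] at hv ⊢
      rw [hpow2, Matrix.mulVec_mulVec, e2]
      exact hv
    · intro v _ h0
      have h0' : (1 - D2) *ᵥ ((1 - A) *ᵥ v) = 0 := by
        rw [Matrix.mulVec_mulVec]; exact h0
      have key := congrArg (fun X : Matrix (Fin n) (Fin n) K => X.mulVec v) e12
      simp only [← Matrix.mulVec_mulVec] at key
      rw [h0', Matrix.mulVec_zero] at key
      have hAv : A.mulVec v = v := by
        have h2 := key.symm
        rw [Matrix.sub_mulVec, Matrix.one_mulVec, sub_eq_zero] at h2
        exact h2.symm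
      exact memrange v hAv
  -- Step 3a : dim Zs ≤ dim ker (M - 1)
  have step3a : finrank K Zs ≤
      finrank K (ker ((A + B) - 1).mulVecLin) + finrank K (⊥ : Submodule K (Fin n → K)) := by
    apply aux_dim_le ((1 + Em) * A)
    · intro v hv
      rw [hZs, Submodule.mem_inf] at hv
      obtain ⟨hv1, hv2⟩ := hv
      have hAv : A.mulVec v = v := mem_range_idem hA hv1
      rw [memker] at hv2 ⊢
      have h1 : (Pm * Pm) *ᵥ v = 0 := by
        rw [← Matrix.mulVec_mulVec, hv2, Matrix.mulVec_zero]
      rw [Matrix.mulVec_mulVec, e3, Matrix.sub_mulVec, h1, hv2, sub_zero]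
    · intro v hv h0
      rw [hZs, Submodule.mem_inf] at hv
      have hAv : A.mulVec v = v := mem_range_idem hA hv.1
      have h0' : (1 + Em) *ᵥ (A *ᵥ v) = 0 := by
        rw [Matrix.mulVec_mulVec]; exact h0
      rw [hAv] at h0'
      have key := congrArg (fun X : Matrix (Fin n) (Fin n) K => X.mulVec v) e13
      simp only [← Matrix.mulVec_mulVec] at key
      rw [hAv, h0', Matrix.mulVec_zero] at key
      rw [Submodule.mem_bot]
      exact key.symm
  -- Step 3b : dim Ys ≤ dim Zs + dim Ks
  have step3b : finrank K Ys ≤ finrank K Zs + finrank K Ks := by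
    apply aux_dim_le Qm
    · intro v hv
      rw [hYs, Submodule.mem_inf] at hv
      obtain ⟨hv1, hv2⟩ := hv
      rw [memker] at hv2
      rw [hZs, Submodule.mem_inf]
      constructor
      · exact memrange _ (by rw [Matrix.mulVec_mulVec, e9])
      · rw [memker, Matrix.mulVec_mulVec, e4, Matrix.neg_mulVec, hv2, neg_zero]
    · intro v hv h0
      rw [hYs, Submodule.mem_inf] at hv
      rw [hKs, Submodule.mem_inf]
      exact ⟨hv.1, (memker _ _).mpr h0⟩
  -- Step 3c : dim kerA + dim Ks ≤ dim Ws + dim Ys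
  have step3c : finrank K kerA + finrank K Ks ≤ finrank K Ws + finrank K Ys := by
    let φ : (kerA × Ks) →ₗ[K] (Fin n → K) :=
      LinearMap.coprod (Sm.mulVecLin.comp kerA.subtype) Ks.subtype
    have hφ : ∀ z : kerA × Ks, φ z = Sm.mulVec z.1.1 + z.2.1 := fun z => rfl
    have h1 : finrank K (range φ) + finrank K (ker φ) = finrank K kerA + finrank K Ks := by
      rw [LinearMap.finrank_range_add_finrank_ker φ, Module.finrank_prod]
    have h2 : finrank K (range φ) ≤ finrank K Ws := by
      apply Submodule.finrank_mono
      rintro w ⟨z, rfl⟩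
      rw [hφ z]
      have hx : A.mulVec z.1.1 = 0 := z.1.2
      have hk : (z.2.1 : Fin n → K) ∈ kerA ⊓ ker Qm.mulVecLin := z.2.2
      rw [Submodule.mem_inf] at hk
      obtain ⟨hk1, hk2⟩ := hk
      have hk1' : A.mulVec z.2.1 = 0 := (memker _ _).mp hk1
      have hk2' : Qm.mulVec z.2.1 = 0 := (memker _ _).mp hk2
      rw [hWs, Submodule.mem_inf]
      constructor
      · refine (memker _ _).mpr ?_
        rw [Matrix.mulVec_add, Matrix.mulVec_mulVec, e7,
          Matrix.zero_mulVec, hk1', add_zero]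
      · have hTS : Tm * Sm = 0 := by rw [hT, mul_assoc, ← hT, e6]
        refine (memker _ _).mpr ?_
        rw [Matrix.mulVec_add, Matrix.mulVec_mulVec, hTS, Matrix.zero_mulVec,
          zero_add, e5, Matrix.neg_mulVec, ← Matrix.mulVec_mulVec, hk2',
          Matrix.mulVec_zero, neg_zero]
    have h3 : finrank K (ker φ) ≤ finrank K Ys := by
      have hmemY : ∀ z : ker φ, (z.1.1.1 : Fin n → K) ∈ Ys := by
        intro z
        have hz : φ z.1 = 0 := z.2
        rw [hφ z.1] at hz
        have hSx : Sm.mulVec z.1.1.1 = -(z.1.2.1 : Fin n → K) :=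
          eq_neg_of_add_eq_zero_left hz
        have hk : (z.1.2.1 : Fin n → K) ∈ kerA ⊓ ker Qm.mulVecLin := z.1.2.2
        rw [Submodule.mem_inf] at hk
        have hk2 : Qm.mulVec z.1.2.1 = 0 := (memker _ _).mp hk.2
        rw [hYs, Submodule.mem_inf]
        refine ⟨z.1.1.2, ?_⟩
        rw [memker, ← Matrix.mulVec_mulVec, hSx, Matrix.mulVec_neg, hk2, neg_zero]
      let j : ker φ →ₗ[K] Ys :=
        { toFun := fun z => ⟨z.1.1.1, hmemY z⟩
          map_add' := fun a b => rfl
          map_smul' := fun c a => rfl }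
      have hinj : Function.Injective j := by
        intro a b hab
        have h1 := congrArg (fun t : Ys => (t : Fin n → K)) hab
        have ha : φ a.1 = 0 := a.2
        have hb : φ b.1 = 0 := b.2
        rw [hφ a.1] at ha
        rw [hφ b.1] at hb
        have h1' : (a.1.1.1 : Fin n → K) = b.1.1.1 := h1
        rw [h1'] at ha
        have h2 : (a.1.2.1 : Fin n → K) = b.1.2.1 := by
          have h4 : Sm.mulVec b.1.1.1 + a.1.2.1 = Sm.mulVec b.1.1.1 + b.1.2.1 := by
            rw [ha, hb]
          exact add_left_cancel h4
        apply Subtype.ext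
        apply Prod.ext
        · exact Subtype.ext h1'
        · exact Subtype.ext h2
      exact LinearMap.finrank_le_finrank_of_injective hinj
    omega
  -- Step 3d : rank Tm + dim Ws ≤ dim kerA
  have step3d : finrank K (range Tm.mulVecLin) + finrank K Ws ≤ finrank K kerA := by
    let ψ : kerA →ₗ[K] (Fin n → K) := Tm.mulVecLin.comp kerA.subtype
    have hψ : ∀ z : kerA, ψ z = Tm.mulVec z.1 := fun z => rfl
    have h1 : finrank K (range ψ) + finrank K (ker ψ) = finrank K kerA :=
      LinearMap.finrank_range_add_finrank_ker ψ
    have h2 : finrank K (range Tm.mulVecLin) ≤ finrank K (range ψ) := by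
      apply Submodule.finrank_mono
      rintro w ⟨u, rfl⟩
      have hu : (1 - A).mulVec u ∈ kerA := by
        rw [hkerA, memker, Matrix.mulVec_mulVec, eA0, Matrix.zero_mulVec]
      refine ⟨⟨(1 - A).mulVec u, hu⟩, ?_⟩
      rw [hψ]
      have hT1 : Tm * (1 - A) = Tm := by rw [mul_sub, mul_one, e14, sub_zero]
      rw [Matrix.mulVec_mulVec, hT1, Matrix.mulVecLin_apply]
    have h3 : finrank K Ws ≤ finrank K (ker ψ) := by
      have hmemW : ∀ w : Ws, (w.1 : Fin n → K) ∈ kerA := by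
        intro w
        have hw : (w.1 : Fin n → K) ∈ kerA ⊓ ker Tm.mulVecLin := w.2
        rw [Submodule.mem_inf] at hw
        exact hw.1
      have hmemW2 : ∀ w : Ws, (⟨w.1, hmemW w⟩ : kerA) ∈ ker ψ := by
        intro w
        rw [LinearMap.mem_ker, hψ]
        have hw : (w.1 : Fin n → K) ∈ kerA ⊓ ker Tm.mulVecLin := w.2
        rw [Submodule.mem_inf] at hw
        exact (memker _ _).mp hw.2
      let j : Ws →ₗ[K] ker ψ :=
        { toFun := fun w => ⟨⟨w.1, hmemW w⟩, hmemW2 w⟩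
          map_add' := fun a b => rfl
          map_smul' := fun c a => rfl }
      have hinj : Function.Injective j := by
        intro a b hab
        have h1 := congrArg (fun t : ker ψ => ((t : kerA) : Fin n → K)) hab
        exact Subtype.ext h1
      exact LinearMap.finrank_le_finrank_of_injective hinj
    omega
  -- rank-nullity facts
  have rnT : finrank K (range Tm.mulVecLin) + finrank K (ker Tm.mulVecLin) = n := by
    have := LinearMap.finrank_range_add_finrank_ker (Tm.mulVecLin)
    rwa [Module.finrank_fin_fun] at this
  have rnA : finrank K (range A.mulVecLin) + finrank K kerA = n := by
    have := LinearMap.finrank_range_add_finrank_ker (A.mulVecLin)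
    rwa [Module.finrank_fin_fun] at this
  have hbot : finrank K (⊥ : Submodule K (Fin n → K)) = 0 := finrank_bot K (Fin n → K)
  omega

end Aux

/-- `nk M lam k` is the number of Jordan blocks of size `≥ k` of `M` at the eigenvalue `lam`,
i.e. `dim ker (M - lam•I)^k - dim ker (M - lam•I)^(k-1)`. -/
noncomputable def nk {K : Type*} [Field K] {n : ℕ} (M : Matrix (Fin n) (Fin n) K) (lam : K) (k : ℕ) : ℕ :=
  Module.finrank K (LinearMap.ker ((M - lam • 1) ^ k).mulVecLin) -
    Module.finrank K (LinearMap.ker ((M - lam • 1) ^ (k - 1)).mulVecLin)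

theorem stmt_12 {K : Type*} [Field K] {n : ℕ} (M A B : Matrix (Fin n) (Fin n) K)
    (hnil : M ^ 3 * (M - 1) ^ 3 = 0) (hM : M = A + B) (hA : A ^ 2 = A) (hB : B ^ 2 = 0) :
    nk M 0 3 ≤ nk M 1 1 ∧ nk M 1 3 ≤ nk M 0 1 := by
  subst hM
  have hA' : A * A = A := by rw [← sq]; exact hA
  have hB' : B * B = 0 := by rw [← sq]; exact hB
  have hcomm : Commute (A + B) ((A + B) - 1) :=
    (Commute.refl (A + B)).sub_right (Commute.one_right (A + B))
  have hker1 : ∀ (Y : Matrix (Fin n) (Fin n) K),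
      LinearMap.ker (-Y).mulVecLin = LinearMap.ker Y.mulVecLin := by
    intro Y
    ext x
    simp only [LinearMap.mem_ker, Matrix.mulVecLin_apply, Matrix.neg_mulVec, neg_eq_zero]
  constructor
  · -- n₃(M,0) ≤ n₁(M,1)
    have hC3 : ((A + B) * (A + B) - (A + B)) ^ 3 = 0 := by
      have h1 : (A + B) * (A + B) - (A + B) = (A + B) * ((A + B) - 1) := by noncomm_ring
      rw [h1, hcomm.mul_pow, hnil]
    have h := core A B hA' hB' hC3
    have g1 : nk (A + B) 0 3 =
        Module.finrank K (LinearMap.ker ((A + B) ^ 3).mulVecLin) -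
        Module.finrank K (LinearMap.ker ((A + B) ^ 2).mulVecLin) := by
      have h0' : A + B - (0:K) • 1 = A + B := by simp
      simp only [nk]
      rw [h0']
    have g2 : nk (A + B) 1 1 =
        Module.finrank K (LinearMap.ker ((A + B) - 1).mulVecLin) := by
      have h0' : A + B - (1:K) • 1 = A + B - 1 := by simp
      simp only [nk]
      rw [h0', pow_one, pow_zero, Matrix.mulVecLin_one, LinearMap.ker_id,
        finrank_bot K (Fin n → K), Nat.sub_zero]
    rw [g1, g2]
    omega
  · -- n₃(M,1) ≤ n₁(M,0)
    have hA2 : (1 - A) * (1 - A) = 1 - A := by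
      have h0 : (1 - A) * (1 - A) = 1 - A - A + A * A := by noncomm_ring
      rw [h0, hA']
      abel
    have hB2 : (-B) * (-B) = 0 := by rw [neg_mul_neg, hB']
    have hsum : (1 - A) + (-B) = 1 - (A + B) := by abel
    have hC3 : ((1 - A + -B) * (1 - A + -B) - (1 - A + -B)) ^ 3 = 0 := by
      rw [hsum]
      have h1 : (1 - (A + B)) * (1 - (A + B)) - (1 - (A + B)) = (A + B) * ((A + B) - 1) := by
        noncomm_ring
      rw [h1, hcomm.mul_pow, hnil]
    have h := core (1 - A) (-B) hA2 hB2 hC3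
    rw [hsum] at h
    -- rewrite kernels
    have k3 : LinearMap.ker ((1 - (A + B)) ^ 3).mulVecLin
        = LinearMap.ker (((A + B) - 1) ^ 3).mulVecLin := by
      have : (1 - (A + B)) ^ 3 = -(((A + B) - 1) ^ 3) := by
        rw [show (1 - (A + B)) = -((A + B) - 1) by abel, Odd.neg_pow ⟨1, by norm_num⟩]
      rw [this, hker1]
    have k2 : LinearMap.ker ((1 - (A + B)) ^ 2).mulVecLin
        = LinearMap.ker (((A + B) - 1) ^ 2).mulVecLin := by
      have : (1 - (A + B)) ^ 2 = ((A + B) - 1) ^ 2 := by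
        rw [show (1 - (A + B)) = -((A + B) - 1) by abel, neg_sq]
      rw [this]
    have k1 : LinearMap.ker ((1 - (A + B)) - 1).mulVecLin
        = LinearMap.ker (A + B).mulVecLin := by
      have : (1 - (A + B)) - 1 = -(A + B) := by abel
      rw [this, hker1]
    rw [k3, k2, k1] at h
    have g1 : nk (A + B) 1 3 =
        Module.finrank K (LinearMap.ker (((A + B) - 1) ^ 3).mulVecLin) -
        Module.finrank K (LinearMap.ker (((A + B) - 1) ^ 2).mulVecLin) := by
      have h0' : A + B - (1:K) • 1 = A + B - 1 := by simp
      simp only [nk]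
      rw [h0']
    have g2 : nk (A + B) 0 1 =
        Module.finrank K (LinearMap.ker (A + B).mulVecLin) := by
      have h0' : A + B - (0:K) • 1 = A + B := by simp
      simp only [nk]
      rw [h0', pow_one, pow_zero, Matrix.mulVecLin_one, LinearMap.ker_id,
        finrank_bot K (Fin n → K), Nat.sub_zero]
    rw [g1, g2]
    omega
end

section
/- Let u be an endomorphism of K^n decomposed as u = a + b with a² = a and b² = 0, and let k ∈ ℕ. Then the subspace E_k := ker(u^k (u − id)^k) is stabilized by both a and b. -/
theorem stmt_16 {K : Type*} [Field K] {n : ℕ} (u a b : Module.End K (Fin n → K))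
    (hu : u = a + b) (ha : a ^ 2 = a) (hb : b ^ 2 = 0) (k : ℕ) :
    (LinearMap.ker (u ^ k * (u - 1) ^ k)).map (a : Module.End K (Fin n → K)) ≤
        LinearMap.ker (u ^ k * (u - 1) ^ k) ∧
    (LinearMap.ker (u ^ k * (u - 1) ^ k)).map (b : Module.End K (Fin n → K)) ≤
        LinearMap.ker (u ^ k * (u - 1) ^ k) := by
  have hkey : u * (u - 1) = a * b + b * a - b := by
    subst hu
    have : (a + b) * (a + b - 1) = a ^ 2 + a * b + b * a + b ^ 2 - a - b := by
      noncomm_ring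
      simp only [mul_smul_comm, smul_eq_mul]
      simp only [mul_one]
    rw [this, ha, hb]
    abel
  have hca : Commute (u * (u - 1)) a := by
    show _ = _
    rw [hkey]
    have h1 : (a * b + b * a - b) * a = a * b * a := by
      have haa : a * a = a := by rw [← pow_two]; exact ha
      rw [sub_mul, add_mul, mul_assoc b a a, haa]
      abel
    have h2 : a * (a * b + b * a - b) = a * b * a := by
      have haa : a * a = a := by rw [← pow_two]; exact ha
      rw [mul_sub, mul_add, ← mul_assoc a a b, haa, ← mul_assoc]
      abel
    rw [h1, h2]
  have hcb : Commute (u * (u - 1)) b := by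
    show _ = _
    rw [hkey]
    have hbb : b * b = 0 := by rw [← pow_two]; exact hb
    have h1 : (a * b + b * a - b) * b = b * a * b := by
      rw [sub_mul, add_mul, mul_assoc a b b, hbb, mul_zero]
      abel
    have h2 : b * (a * b + b * a - b) = b * a * b := by
      rw [mul_sub, mul_add, ← mul_assoc b b a, hbb, zero_mul, ← mul_assoc]
      abel
    rw [h1, h2]
  have hpow : u ^ k * (u - 1) ^ k = (u * (u - 1)) ^ k := by
    exact (Commute.mul_pow (by exact (Commute.refl u).sub_right (Commute.one_right u)) k).symm
  rw [hpow]
  constructor <;>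
  · rintro x ⟨y, hy, rfl⟩
    simp only [LinearMap.mem_ker] at hy ⊢
    first
    | (have := (hca.symm.pow_right k).eq
       calc ((u * (u - 1)) ^ k) (a y) = (((u * (u - 1)) ^ k) * a) y := rfl
        _ = (a * (u * (u - 1)) ^ k) y := by rw [← this]
        _ = a (((u * (u - 1)) ^ k) y) := rfl
        _ = 0 := by rw [hy, map_zero])
    | (have := (hcb.symm.pow_right k).eq
       calc ((u * (u - 1)) ^ k) (b y) = (((u * (u - 1)) ^ k) * b) y := rfl
        _ = (b * (u * (u - 1)) ^ k) y := by rw [← this]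
        _ = b (((u * (u - 1)) ^ k) y) := rfl
        _ = 0 := by rw [hy, map_zero])
end

section
/- Let α, β be distinct nonzero elements of a field K, and let M ∈ Mat_n(K) be of the form M = (αI_p + N) ⊕ (βI_q + N') with N² = 0, (N')² = 0, p + q = n. Suppose M = αA + βB where A² = A and B² = B. Then, writing A₁ for the upper-left p×p block of A, A₁ commutes with N and A₁ = I_p + (β/(α(β−α)))·N. -/
private lemma sub_helper17 {M : Type*} [AddCommGroup M] {a b c d : M} (h : a = b)
    (hsub : c - d = a - b) : c = d := by
  rw [← sub_eq_zero, hsub, sub_eq_zero]; exact h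

theorem stmt_17 {K : Type*} [Field K] {p q : ℕ} (α β : K) (hα : α ≠ 0) (hβ : β ≠ 0)
    (hαβ : α ≠ β) (N : Matrix (Fin p) (Fin p) K) (N' : Matrix (Fin q) (Fin q) K)
    (hN : N ^ 2 = 0) (hN' : N' ^ 2 = 0)
    (A B : Matrix (Fin p ⊕ Fin q) (Fin p ⊕ Fin q) K) (hA : A ^ 2 = A) (hB : B ^ 2 = B)
    (hM : Matrix.fromBlocks (α • 1 + N) 0 0 (β • 1 + N') = α • A + β • B) :
    Commute A.toBlocks₁₁ N ∧ A.toBlocks₁₁ = 1 + (β / (α * (β - α))) • N := by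
  have hd : α * (β - α) ≠ 0 := mul_ne_zero hα (sub_ne_zero.mpr hαβ.symm)
  have hNN : N * N = 0 := by rw [← pow_two]; exact hN
  have hAA : A * A = A := by rw [← pow_two]; exact hA
  have hBB : B * B = B := by rw [← pow_two]; exact hB
  obtain ⟨a, b, c, d, rfl⟩ : ∃ a b c d, A = Matrix.fromBlocks a b c d :=
    ⟨_, _, _, _, (Matrix.fromBlocks_toBlocks A).symm⟩
  set A' : Matrix (Fin p ⊕ Fin q) (Fin p ⊕ Fin q) K := Matrix.fromBlocks a b c d with hA'def
  set M : Matrix (Fin p ⊕ Fin q) (Fin p ⊕ Fin q) K :=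
    Matrix.fromBlocks (α • 1 + N) 0 0 (β • 1 + N') with hMdef
  have ha : A'.toBlocks₁₁ = a := Matrix.toBlocks_fromBlocks₁₁ a b c d
  have hBM : β • B = M - α • A' := by rw [hM]; abel
  have key : (M - α • A') * (M - α • A') = β • M - (α * β) • A' := by
    have h1 : (β • B) * (β • B) = β • (β • B) := by
      rw [smul_mul_assoc, mul_smul_comm, hBB]
    rw [hBM] at h1
    rw [h1, smul_sub, smul_smul, mul_comm β α]
  have e1 : M * M + (α * α) • A' + (α * β) • A' =
      α • (M * A') + α • (A' * M) + β • M := by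
    apply sub_helper17 key
    simp only [sub_mul, mul_sub, smul_mul_assoc, mul_smul_comm, smul_smul, hAA]
    module
  have e2 : (α • (1 : Matrix (Fin p) (Fin p) K) + N) * (α • 1 + N) + (α * α) • a
        + (α * β) • a
      = α • ((α • 1 + N) * a) + α • (a * (α • 1 + N)) + β • (α • 1 + N) := by
    have h := e1
    simp only [hMdef, hA'def, Matrix.fromBlocks_multiply, Matrix.fromBlocks_smul,
      Matrix.fromBlocks_add, Matrix.zero_mul, Matrix.mul_zero, add_zero, zero_add,
      smul_zero] at h
    exact (Matrix.fromBlocks_inj.mp h).1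
  have key1 : α • (N * a) + α • (a * N) =
      (α * (α - β)) • (1 : Matrix (Fin p) (Fin p) K) + (2 * α - β) • N
        + (α * (β - α)) • a := by
    apply sub_helper17 e2.symm
    simp only [add_mul, mul_add, smul_mul_assoc, mul_smul_comm, one_mul, mul_one,
      hNN, smul_zero, add_zero, zero_add]
    module
  have hL : α • (N * a * N) = (α * (α - β)) • N + (α * (β - α)) • (N * a) := by
    have h := congrArg (fun X => N * X) key1
    simp only [mul_add, mul_smul_comm, mul_one, ← mul_assoc, hNN, zero_mul,
      smul_zero, zero_add, add_zero] at h
    exact h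
  have hR : α • (N * a * N) = (α * (α - β)) • N + (α * (β - α)) • (a * N) := by
    have h := congrArg (fun X => X * N) key1
    simp only [add_mul, smul_mul_assoc, one_mul, mul_assoc, hNN, mul_zero,
      smul_zero, zero_add, add_zero] at h
    simpa only [← mul_assoc] using h
  have comm : N * a = a * N := by
    have h := add_left_cancel (hL.symm.trans hR)
    exact smul_right_injective _ hd h
  have hR0 : (α * (α - β)) • N + (α * (β - α)) • (a * N) = 0 := by
    rw [← hR, comm, mul_assoc, hNN, mul_zero, smul_zero]
  have aN : a * N = N := by
    have h3 : (α * (β - α)) • (a * N) = (α * (β - α)) • N := by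
      apply sub_helper17 hR0
      module
    exact smul_right_injective _ hd h3
  have Na : N * a = N := comm.trans aN
  refine ⟨?_, ?_⟩
  · rw [ha]; exact comm.symm
  · rw [ha]
    rw [Na, aN] at key1
    have h6 : (α * (β - α)) • a = (α * (β - α)) • (1 : Matrix (Fin p) (Fin p) K)
        + β • N := by
      apply sub_helper17 key1.symm
      module
    have h7 : (α * (β - α)) • a =
        (α * (β - α)) • ((1 : Matrix (Fin p) (Fin p) K) + (β / (α * (β - α))) • N) := by
      rw [h6, smul_add, smul_smul, show α * (β - α) * (β / (α * (β - α))) = β from by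
        field_simp]
    exact smul_right_injective _ hd h7
end
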